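/- arXiv:2104.09296 — 2 statements merged into one kernel-verified Lean document; each statement's English description precedes it below -/
import Mathlib

section
/- Let R be a von Neumann regular ring and Q a von Neumann regular, right self-injective ring containing R as a subring with R essential in Q as a right R-module (Q the maximal right quotient ring of R). Let e, f be idempotents of R with eR ≅ fR as right R-modules, and let g be an idempotent of Q such that eQ ⊕ gQ = Q = fQ ⊕ gQ. Then eR ⊕ (gQ ∩ R) and fR ⊕ (gQ ∩ R) are essential right ideals of R (in particular these sums are direct). -/
/-- A ring `R` is von Neumann regular if for every `a ∈ R` there is `b ∈ R`
with `a = a * b * a`. -/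
def IsVonNeumannRegularRing (R : Type*) [Ring R] : Prop :=
  ∀ a : R, ∃ b : R, a = a * b * a

/-- A subset `A` of `Q` is a right `R`-submodule set for a subring `R ≤ Q`:
it is an additive subgroup closed under right multiplication by elements of `R`. -/
def IsRightSubmodSet {Q : Type*} [Ring Q] (R : Subring Q) (A : Set Q) : Prop :=
  0 ∈ A ∧ (∀ a ∈ A, ∀ b ∈ A, a + b ∈ A) ∧ (∀ a ∈ A, -a ∈ A) ∧
    ∀ a ∈ A, ∀ r ∈ R, a * r ∈ A

/-- `A` is essential in `B` as right `R`-modules (`A ⊆ B ⊆ Q`, `R` a subring of `Q`):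
every nonzero right `R`-submodule of `B` has nonzero intersection with `A`. -/
def EssentialInSet {Q : Type*} [Ring Q] (R : Subring Q) (A B : Set Q) : Prop :=
  A ⊆ B ∧ ∀ X : Set Q, IsRightSubmodSet R X → X ⊆ B → (∃ x ∈ X, x ≠ 0) →
    ∃ x ∈ X, x ∈ A ∧ x ≠ 0


/-! Write a nonzero `x` of a right ideal `X ⊆ R` as `x = e p + g q` using `Q = eQ ⊕ gQ`. Since `R`
is essential in `Q`, some `r ∈ R` makes `e p r` a nonzero element of `R` (take `r = 1` if
`e p = 0`). Then `x r ∈ X` is nonzero, because otherwise `e p r = -(g q r) ∈ eQ ∩ gQ = 0`, and it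
splits as `e p r ∈ eR` plus `g q r = x r - e p r ∈ gQ ∩ R`. -/

open Submodule

section

variable {Q : Type*} [Ring Q]

lemma mem_span_op_singleton {a x : Q} : x ∈ span Qᵐᵒᵖ {a} ↔ ∃ q : Q, x = a * q := by
  rw [mem_span_singleton]
  constructor
  · rintro ⟨c, rfl⟩
    exact ⟨c.unop, rfl⟩
  · rintro ⟨q, rfl⟩
    exact ⟨MulOpposite.op q, rfl⟩

lemma eq_zero_of_disjoint_span {e g : Q} (h : Disjoint (span Qᵐᵒᵖ {e}) (span Qᵐᵒᵖ {g}))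
    {z p q : Q} (hp : z = e * p) (hq : z = g * q) : z = 0 :=
  (disjoint_def.1 h) z (mem_span_op_singleton.2 ⟨p, hp⟩) (mem_span_op_singleton.2 ⟨q, hq⟩)

variable (R : Subring Q)

lemma isRightSubmodSet_mul_left (a : Q) : IsRightSubmodSet R {y | ∃ r ∈ R, y = a * r} :=
  ⟨⟨0, R.zero_mem, (mul_zero a).symm⟩,
    fun _ ⟨r, hr, hx⟩ _ ⟨s, hs, hy⟩ => ⟨r + s, R.add_mem hr hs, by rw [hx, hy, mul_add]⟩,
    fun _ ⟨r, hr, hx⟩ => ⟨-r, R.neg_mem hr, by rw [hx, mul_neg]⟩,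
    fun _ ⟨r, hr, hx⟩ s hs => ⟨r * s, R.mul_mem hr hs, by rw [hx, mul_assoc]⟩⟩

variable {R}

lemma exists_mul_mem_ne_zero (hRess : EssentialInSet R (R : Set Q) Set.univ) {a : Q}
    (ha : a ≠ 0) : ∃ r ∈ R, a * r ∈ R ∧ a * r ≠ 0 := by
  obtain ⟨_, ⟨r, hr, rfl⟩, har, har0⟩ := hRess.2 _ (isRightSubmodSet_mul_left R a)
    (Set.subset_univ _) ⟨a, ⟨1, R.one_mem, (mul_one a).symm⟩, ha⟩
  exact ⟨r, hr, har, har0⟩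

lemma exists_mul_mem_of_disjoint_span (hRess : EssentialInSet R (R : Set Q) Set.univ)
    {e g : Q} (h : Disjoint (span Qᵐᵒᵖ {e}) (span Qᵐᵒᵖ {g})) {x p q : Q} (hx : x ≠ 0)
    (hxpq : x = e * p + g * q) : ∃ r ∈ R, e * p * r ∈ R ∧ x * r ≠ 0 := by
  by_cases hp : e * p = 0
  · exact ⟨1, R.one_mem, by rw [hp, zero_mul]; exact R.zero_mem, by rwa [mul_one]⟩
  obtain ⟨r, hr, hpr, hpr0⟩ := exists_mul_mem_ne_zero hRess hp
  refine ⟨r, hr, hpr, fun hxr => hpr0 ?_⟩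
  have hneg : e * p * r = g * -(q * r) := by
    rw [mul_neg, ← mul_assoc, eq_neg_iff_add_eq_zero, ← add_mul, ← hxpq, hxr]
  exact eq_zero_of_disjoint_span h (mul_assoc e p r) hneg

lemma mul_inter_mul_inter_eq_zero {e g : Q} (h : Disjoint (span Qᵐᵒᵖ {e}) (span Qᵐᵒᵖ {g})) :
    {y : Q | ∃ r ∈ R, y = e * r} ∩ ({z : Q | ∃ q : Q, z = g * q} ∩ (R : Set Q)) = {0} := by
  refine Set.eq_singleton_iff_unique_mem.2 ⟨?_, ?_⟩
  · exact ⟨⟨0, R.zero_mem, (mul_zero e).symm⟩, ⟨⟨0, (mul_zero g).symm⟩, R.zero_mem⟩⟩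
  · rintro y ⟨⟨r, -, hr⟩, ⟨q, hq⟩, -⟩
    exact eq_zero_of_disjoint_span h hr hq

lemma essentialInSet_mul_add_mul_inter (hRess : EssentialInSet R (R : Set Q) Set.univ)
    {e g : Q} (heR : e ∈ R) (he : IsIdempotentElem e)
    (h : IsCompl (span Qᵐᵒᵖ {e}) (span Qᵐᵒᵖ {g})) :
    EssentialInSet R
      {y : Q | ∃ a ∈ {y : Q | ∃ r ∈ R, y = e * r},
        ∃ b ∈ {z : Q | ∃ q : Q, z = g * q} ∩ (R : Set Q), y = a + b} (R : Set Q) := by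
  refine ⟨?_, fun X hX hXR ⟨x, hxX, hx⟩ => ?_⟩
  · rintro y ⟨_, ⟨r, hr, rfl⟩, b, ⟨-, hb⟩, rfl⟩
    exact R.add_mem (R.mul_mem heR hr) hb
  obtain ⟨_, hep, _, hgq, hxpq⟩ := mem_sup.1 (h.sup_eq_top ▸ mem_top : x ∈ _ ⊔ _)
  obtain ⟨p, rfl⟩ := mem_span_op_singleton.1 hep
  obtain ⟨q, rfl⟩ := mem_span_op_singleton.1 hgq
  obtain ⟨r, hr, hpr, hxr⟩ := exists_mul_mem_of_disjoint_span hRess h.disjoint hx hxpq.symm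
  have hxrR : x * r ∈ R := hXR (hX.2.2.2 x hxX r hr)
  have hdecomp : x * r = e * p * r + g * (q * r) := by rw [← hxpq, add_mul, mul_assoc g]
  refine ⟨x * r, hX.2.2.2 x hxX r hr, ⟨e * p * r, ⟨e * p * r, hpr, ?_⟩, g * (q * r),
    ⟨⟨q * r, rfl⟩, ?_⟩, hdecomp⟩, hxr⟩
  · rw [← mul_assoc, ← mul_assoc, he.eq]
  · rw [eq_sub_of_add_eq' hdecomp.symm]
    exact R.sub_mem hxrR hpr

end

theorem eR_plus_gQ_cap_R_essential_general
    (Q : Type*) [Ring Q]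
    (R : Subring Q)
    (hRess : EssentialInSet R (R : Set Q) Set.univ)
    (e f : ↥R) (he : IsIdempotentElem e) (hf : IsIdempotentElem f)
    (g : Q)
    (hde : Submodule.span Qᵐᵒᵖ {(e : Q)} ⊓ Submodule.span Qᵐᵒᵖ {g} = ⊥)
    (hse : Submodule.span Qᵐᵒᵖ {(e : Q)} ⊔ Submodule.span Qᵐᵒᵖ {g} = ⊤)
    (hdf : Submodule.span Qᵐᵒᵖ {(f : Q)} ⊓ Submodule.span Qᵐᵒᵖ {g} = ⊥)
    (hsf : Submodule.span Qᵐᵒᵖ {(f : Q)} ⊔ Submodule.span Qᵐᵒᵖ {g} = ⊤) :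
    ({y : Q | ∃ r ∈ R, y = (e : Q) * r} ∩ ({z : Q | ∃ q : Q, z = g * q} ∩ (R : Set Q))
        = {0} ∧
      EssentialInSet R
        {y : Q | ∃ a ∈ {y : Q | ∃ r ∈ R, y = (e : Q) * r},
          ∃ b ∈ {z : Q | ∃ q : Q, z = g * q} ∩ (R : Set Q), y = a + b}
        (R : Set Q)) ∧
    ({y : Q | ∃ r ∈ R, y = (f : Q) * r} ∩ ({z : Q | ∃ q : Q, z = g * q} ∩ (R : Set Q))
        = {0} ∧
      EssentialInSet R
        {y : Q | ∃ a ∈ {y : Q | ∃ r ∈ R, y = (f : Q) * r},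
          ∃ b ∈ {z : Q | ∃ q : Q, z = g * q} ∩ (R : Set Q), y = a + b}
        (R : Set Q)) := by
  have hcompl_e := IsCompl.of_eq hde hse
  have hcompl_f := IsCompl.of_eq hdf hsf
  exact ⟨⟨mul_inter_mul_inter_eq_zero hcompl_e.disjoint,
      essentialInSet_mul_add_mul_inter hRess e.2 (congrArg Subtype.val he) hcompl_e⟩,
    ⟨mul_inter_mul_inter_eq_zero hcompl_f.disjoint,
      essentialInSet_mul_add_mul_inter hRess f.2 (congrArg Subtype.val hf) hcompl_f⟩⟩

/-- Setup: `R` is a von Neumann regular subring of its maximal right quotient ring `Q`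
(a von Neumann regular right self-injective ring in which `R` is essential as a right
`R`-module); `e, f` are idempotents of `R` with `eR ≅ fR` as right `R`-modules, and `g`
is an idempotent of `Q` with `eQ ⊕ gQ = Q = fQ ⊕ gQ` (internal direct sums of right
ideals of `Q`, i.e. `Qᵐᵒᵖ`-submodules).
Conclusion: `eR ⊕ (gQ ∩ R)` and `fR ⊕ (gQ ∩ R)` are essential right ideals of `R`;
in particular the sums are direct (`eR ∩ (gQ ∩ R) = 0` and `fR ∩ (gQ ∩ R) = 0`). -/
theorem eR_plus_gQ_cap_R_essential
    (Q : Type*) [Ring Q] (hQreg : IsVonNeumannRegularRing Q)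
    (hQinj : Module.Injective Qᵐᵒᵖ Q)
    (R : Subring Q) (hRreg : IsVonNeumannRegularRing ↥R)
    (hRess : EssentialInSet R (R : Set Q) Set.univ)
    (e f : ↥R) (he : IsIdempotentElem e) (hf : IsIdempotentElem f)
    (hef : Nonempty ((Submodule.span (↥R)ᵐᵒᵖ {e} : Submodule (↥R)ᵐᵒᵖ ↥R) ≃ₗ[(↥R)ᵐᵒᵖ]
      (Submodule.span (↥R)ᵐᵒᵖ {f} : Submodule (↥R)ᵐᵒᵖ ↥R)))
    (g : Q) (hg : IsIdempotentElem g)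
    (hde : Submodule.span Qᵐᵒᵖ {(e : Q)} ⊓ Submodule.span Qᵐᵒᵖ {g} = ⊥)
    (hse : Submodule.span Qᵐᵒᵖ {(e : Q)} ⊔ Submodule.span Qᵐᵒᵖ {g} = ⊤)
    (hdf : Submodule.span Qᵐᵒᵖ {(f : Q)} ⊓ Submodule.span Qᵐᵒᵖ {g} = ⊥)
    (hsf : Submodule.span Qᵐᵒᵖ {(f : Q)} ⊔ Submodule.span Qᵐᵒᵖ {g} = ⊤) :
    ({y : Q | ∃ r ∈ R, y = (e : Q) * r} ∩ ({z : Q | ∃ q : Q, z = g * q} ∩ (R : Set Q))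
        = {0} ∧
      EssentialInSet R
        {y : Q | ∃ a ∈ {y : Q | ∃ r ∈ R, y = (e : Q) * r},
          ∃ b ∈ {z : Q | ∃ q : Q, z = g * q} ∩ (R : Set Q), y = a + b}
        (R : Set Q)) ∧
    ({y : Q | ∃ r ∈ R, y = (f : Q) * r} ∩ ({z : Q | ∃ q : Q, z = g * q} ∩ (R : Set Q))
        = {0} ∧
      EssentialInSet R
        {y : Q | ∃ a ∈ {y : Q | ∃ r ∈ R, y = (f : Q) * r},
          ∃ b ∈ {z : Q | ∃ q : Q, z = g * q} ∩ (R : Set Q), y = a + b}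
        (R : Set Q)) :=
  eR_plus_gQ_cap_R_essential_general Q R hRess e f he hf g hde hse hdf hsf
end

section
/- Let R be a von Neumann regular ring and Q a von Neumann regular, right self-injective ring containing R as a subring with R essential in Q as a right R-module (Q the maximal right quotient ring of R). Suppose R satisfies the following weak closure extension property: for any two right ideals of R that are isomorphic as right R-modules, their essential closures in R are subisomorphic (each embeds into the other as a right R-module). If Q is unit regular (equivalently, perspective), then R is unit regular. -/
/-- `N` is an essential submodule of `P`. -/
def Submodule.EssentialIn {R M : Type*} [Ring R] [AddCommGroup M] [Module R M]
    (N P : Submodule R M) : Prop :=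
  N ≤ P ∧ ∀ X : Submodule R M, X ≤ P → X ≠ ⊥ → X ⊓ N ≠ ⊥

/-- A submodule is closed if it has no proper essential extension inside the ambient
module. -/
def Submodule.IsClosedSub {R M : Type*} [Ring R] [AddCommGroup M] [Module R M]
    (N : Submodule R M) : Prop :=
  ∀ P : Submodule R M, N.EssentialIn P → P = N

theorem Submodule.isClosedSub_of_isCompl {R M : Type*} [Ring R] [AddCommGroup M] [Module R M]
    {N K : Submodule R M} (h : IsCompl N K) : N.IsClosedSub := by
  intro P hP
  have hKP : K ⊓ P = ⊥ := by
    by_contra hne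
    refine hP.2 _ inf_le_right hne (eq_bot_iff.mpr ?_)
    exact h.disjoint.symm.le_bot.trans' (inf_le_inf_right N inf_le_left)
  calc P = (N ⊔ K) ⊓ P := by rw [h.sup_eq_top, top_inf_eq]
    _ = N := by rw [sup_inf_assoc_of_le K hP.1, hKP, sup_bot_eq]

theorem Submodule.essentialIn_inf_of_essentialIn_top {R M : Type*} [Ring R] [AddCommGroup M]
    [Module R M] {N : Submodule R M} (hN : N.EssentialIn ⊤) (P : Submodule R M) :
    (P ⊓ N).EssentialIn P := by
  refine ⟨inf_le_left, fun X hXP hX => ?_⟩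
  rw [← inf_assoc, inf_eq_left.mpr hXP]
  exact hN.2 X le_top hX

section Corners

variable {S : Type*} [Ring S]

theorem isDedekindFiniteMonoid_of_unitRegular (h : ∀ a : S, ∃ u : Sˣ, a = a * u * a) :
    IsDedekindFiniteMonoid S where
  mul_eq_one_symm {a b} hab := by
    obtain ⟨u, hu⟩ := h b
    have hb : b = ↑u⁻¹ := Units.eq_inv_of_mul_eq_one_left <| by
      linear_combination (norm := noncomm_ring) hab - a * hu - hab * u * b
    have ha : a = u := by
      linear_combination (norm := noncomm_ring) hab * u - a * hb * u - a * Units.inv_mul u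
    rw [hb, ha, Units.inv_mul]

theorem exists_complement_iso_of_unit_inner_inverse {a b : S} {u : Sˣ}
    (hab : a = a * b * a) (hau : a = a * u * a) :
    ∃ s t : S, s * t = 1 - a * b ∧ t * s = 1 - b * a ∧ b * a * t = 0 ∧ a * b * s = 0 := by
  refine ⟨(1 - a * b) * ↑u⁻¹ * (1 - b * a), u - u * a * u, ?_, ?_, ?_, ?_⟩
  · linear_combination (norm := noncomm_ring) (1 - a * b) * Units.inv_mul u * (1 - a * u)
      - (1 - a * b) * ↑u⁻¹ * b * hau * u - hab * u
  · linear_combination (norm := noncomm_ring) (1 - u * a) * Units.mul_inv u * (1 - b * a)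
      - u * hau * b * ↑u⁻¹ * (1 - b * a) - u * hab
  · linear_combination (norm := noncomm_ring) b * hau * u
  · linear_combination (norm := noncomm_ring) hab * b * ↑u⁻¹ * (1 - b * a)

theorem isIdempotentElem_mul_of_eq_mul_mul {a b : S} (hab : a = a * b * a) :
    IsIdempotentElem (a * b) ∧ IsIdempotentElem (b * a) := by
  constructor <;> unfold IsIdempotentElem
  · linear_combination (norm := noncomm_ring) -hab * b
  · linear_combination (norm := noncomm_ring) -b * hab

theorem mul_eq_one_sub_of_corner_iso [IsDedekindFiniteMonoid S] {e f s t c d : S}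
    (hst : s * t = 1 - e) (hts : t * s = 1 - f) (hft : f * t = 0) (hes : e * s = 0)
    (hce : c * e = 0) (hfc : f * c = 0) (hdf : d * f = 0) (hdc : d * c = 1 - e) :
    c * d = 1 - f := by
  have hYX : (t * d + f) * (c * s + f) = 1 := by
    linear_combination (norm := noncomm_ring)
      hts + f * hts - t * hes + t * hdc * s + t * hdf + hfc * s - hft * s
  linear_combination (norm := noncomm_ring) mul_eq_one_symm hYX + hce * d - c * hst * d
    - c * hes + c * hst * s - hft * d + hft * s - f * hts - c * s * hts

theorem IsVonNeumannRegularRing.exists_corner_left_inverse (hreg : IsVonNeumannRegularRing S)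
    {e f c : S} (he : IsIdempotentElem e) (hf : IsIdempotentElem f) (hce : c * e = 0)
    (hfc : f * c = 0) (hker : ∀ z, e * z = 0 → c * z = 0 → z = 0) :
    ∃ d, e * d = 0 ∧ d * f = 0 ∧ d * c = 1 - e := by
  obtain ⟨b, hb⟩ := hreg c
  have hdc : (1 - e) * b * c = 1 - e := by
    refine sub_eq_zero.mp (hker _ ?_ ?_)
    · linear_combination (norm := noncomm_ring) -he.eq * (b * c - 1)
    · linear_combination (norm := noncomm_ring) -hb - hce * (b * c - 1)
  refine ⟨(1 - e) * b * (1 - f), ?_, ?_, ?_⟩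
  · linear_combination (norm := noncomm_ring) -he.eq * b * (1 - f)
  · linear_combination (norm := noncomm_ring) -(1 - e) * b * hf.eq
  · linear_combination (norm := noncomm_ring) hdc - (1 - e) * b * hfc

theorem exists_unit_of_complement_iso {a b c d : S} (hab : a = a * b * a)
    (hce : c * (a * b) = 0) (hfc : b * a * c = 0) (hed : a * b * d = 0) (hdf : d * (b * a) = 0)
    (hdc : d * c = 1 - a * b) (hcd : c * d = 1 - b * a) :
    ∃ u : Sˣ, a = a * u * a := by
  refine ⟨⟨b * a * b + c, a + d, ?_, ?_⟩, ?_⟩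
  · linear_combination (norm := noncomm_ring) -b * hab + b * hed + c * hab + hce * a + hcd
  · linear_combination (norm := noncomm_ring) -hab * b + a * hfc + hab * c + hdf * b + hdc
  · linear_combination (norm := noncomm_ring) hab + hab * b * a - hab * c * a - a * hfc * a

/-- For idempotent `p` this is the right ideal `(1 - p) S`. -/
def rightAnnihilator (p : S) : Submodule Sᵐᵒᵖ S :=
  LinearMap.ker (DistribSMul.toLinearMap Sᵐᵒᵖ S p)

theorem mem_rightAnnihilator {p x : S} : x ∈ rightAnnihilator p ↔ p * x = 0 := Iff.rfl

theorem isClosedSub_rightAnnihilator {p : S} (hp : IsIdempotentElem p) :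
    (rightAnnihilator p).IsClosedSub := by
  refine Submodule.isClosedSub_of_isCompl
    (LinearMap.IsIdempotentElem.isCompl (LinearMap.ext fun x => ?_)).symm
  show p * (p * x) = p * x
  rw [← mul_assoc, hp.eq]

theorem exists_mul_of_injective_rightAnnihilator {e f : S} (he : IsIdempotentElem e)
    {φ : rightAnnihilator e →ₗ[Sᵐᵒᵖ] rightAnnihilator f} (hφ : Function.Injective φ) :
    ∃ c : S, c * e = 0 ∧ f * c = 0 ∧ ∀ z, e * z = 0 → c * z = 0 → z = 0 := by
  let x₀ : rightAnnihilator e := ⟨1 - e, by simp [mem_rightAnnihilator, mul_sub, he.eq]⟩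
  have hφ_mul : ∀ x : rightAnnihilator e, (φ x : S) = φ x₀ * x := by
    intro x
    have hx : x = MulOpposite.op (x : S) • x₀ :=
      Subtype.ext <| by simp [x₀, sub_mul, mem_rightAnnihilator.mp x.2]
    conv_lhs => rw [hx, map_smul]
    rfl
  refine ⟨φ x₀, ?_, (φ x₀).2, fun z hez hcz => ?_⟩
  · have h : (φ x₀ : S) = φ x₀ * (1 - e) := hφ_mul x₀
    linear_combination (norm := noncomm_ring) h
  · have : φ ⟨z, hez⟩ = φ 0 := Subtype.ext <| by rw [hφ_mul, map_zero]; exact hcz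
    exact congrArg Subtype.val (hφ this)

end Corners

section DenominatorIdeal

variable {Q : Type*} [Ring Q] {R : Subring Q}

theorem isRightSubmodSet_range_mul (q : Q) :
    IsRightSubmodSet R (Set.range fun r : R => q * r) := by
  refine ⟨⟨0, by simp⟩, ?_, ?_, ?_⟩
  · rintro _ ⟨r, rfl⟩ _ ⟨r', rfl⟩
    exact ⟨r + r', by simp [mul_add]⟩
  · rintro _ ⟨r, rfl⟩
    exact ⟨-r, by simp⟩
  · rintro _ ⟨r, rfl⟩ r' hr'
    exact ⟨r * ⟨r', hr'⟩, by simp [mul_assoc]⟩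

variable (R) in
def denominatorIdeal (τ : Q) : Submodule Rᵐᵒᵖ R where
  carrier := {x | τ * x ∈ R}
  add_mem' {x y} hx hy := by simpa [mul_add] using R.add_mem hx hy
  zero_mem' := by simp [R.zero_mem]
  smul_mem' c x hx := by simpa [mul_assoc] using R.mul_mem hx c.unop.2

theorem mem_denominatorIdeal {τ : Q} {x : R} : x ∈ denominatorIdeal R τ ↔ τ * x ∈ R :=
  Iff.rfl

theorem denominatorIdeal_essentialIn_top (hR : EssentialInSet R (R : Set Q) Set.univ) (τ : Q) :
    (denominatorIdeal R τ).EssentialIn ⊤ := by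
  refine ⟨le_top, fun X _ hX => ?_⟩
  obtain ⟨x, hxX, hx⟩ := (Submodule.ne_bot_iff X).mp hX
  rw [Submodule.ne_bot_iff]
  by_cases hτx : τ * x = 0
  · exact ⟨x, ⟨hxX, by simp [mem_denominatorIdeal, hτx, R.zero_mem]⟩, hx⟩
  obtain ⟨_, ⟨r, rfl⟩, hr, hne⟩ := hR.2 _ (isRightSubmodSet_range_mul (τ * x))
    (Set.subset_univ _) ⟨τ * x, ⟨1, by simp⟩, hτx⟩
  refine ⟨x * r, ⟨X.smul_mem (MulOpposite.op r) hxX, ?_⟩, fun h => hne ?_⟩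
  · simpa [mem_denominatorIdeal, mul_assoc] using hr
  · simpa [mul_assoc] using congrArg (τ * ((↑) : R → Q) ·) h

theorem mul_mul_eq_of_mem_rightAnnihilator {e x : R} (hx : x ∈ rightAnnihilator e) {σ τ : Q}
    (hστ : σ * τ = 1 - e) : σ * (τ * x) = x := by
  have hex : (e : Q) * x = 0 := by exact_mod_cast hx
  rw [← mul_assoc, hστ, sub_mul, one_mul, hex, sub_zero]

def mulLeftRestrict {e f : R} {τ σ : Q} (hfτ : f * τ = 0) (hστ : σ * τ = 1 - e) :
    ↥(rightAnnihilator e ⊓ denominatorIdeal R τ) →ₗ[Rᵐᵒᵖ]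
      ↥(rightAnnihilator f ⊓ denominatorIdeal R σ) where
  toFun x := ⟨⟨τ * x, x.2.2⟩, Subtype.ext <| by simp [← mul_assoc, hfτ],
    by simp [mem_denominatorIdeal, mul_mul_eq_of_mem_rightAnnihilator x.2.1 hστ]⟩
  map_add' x y := by ext; simp [mul_add]
  map_smul' c x := by ext; simp [mul_assoc]

def mulLeftRestrictEquiv {e f : R} {s t : Q} (hst : s * t = 1 - e) (hts : t * s = 1 - f)
    (hft : f * t = 0) (hes : e * s = 0) :
    ↥(rightAnnihilator e ⊓ denominatorIdeal R t) ≃ₗ[Rᵐᵒᵖ]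
      ↥(rightAnnihilator f ⊓ denominatorIdeal R s) :=
  .ofLinearMap (mulLeftRestrict hft hst) (mulLeftRestrict hes hts)
    (LinearMap.ext fun y => Subtype.ext <| Subtype.ext <|
      mul_mul_eq_of_mem_rightAnnihilator y.2.1 hts)
    (LinearMap.ext fun x => Subtype.ext <| Subtype.ext <|
      mul_mul_eq_of_mem_rightAnnihilator x.2.1 hst)

end DenominatorIdeal

theorem unit_regular_descends_of_weak_closure_extension_general
    (Q : Type*) [Ring Q]
    (R : Subring Q) (hRreg : IsVonNeumannRegularRing ↥R)
    (hRess : EssentialInSet R (R : Set Q) Set.univ)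
    (hwcep : ∀ I J : Submodule (↥R)ᵐᵒᵖ ↥R, Nonempty (I ≃ₗ[(↥R)ᵐᵒᵖ] J) →
      ∀ I' J' : Submodule (↥R)ᵐᵒᵖ ↥R,
        I.EssentialIn I' → I'.IsClosedSub → J.EssentialIn J' → J'.IsClosedSub →
        (∃ φ : I' →ₗ[(↥R)ᵐᵒᵖ] J', Function.Injective φ) ∧
        (∃ ψ : J' →ₗ[(↥R)ᵐᵒᵖ] I', Function.Injective ψ))
    (hQur : ∀ a : Q, ∃ u : Qˣ, a = a * u * a) :
    ∀ a : ↥R, ∃ u : (↥R)ˣ, a = a * u * a := by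
  intro a
  obtain ⟨b, hab⟩ := hRreg a
  obtain ⟨v, hv⟩ := hQur a
  have habQ : (a : Q) = a * b * a := by exact_mod_cast congrArg Subtype.val hab
  obtain ⟨s, t, hst, hts, hft, hes⟩ := exists_complement_iso_of_unit_inner_inverse habQ hv
  obtain ⟨he, hf⟩ := isIdempotentElem_mul_of_eq_mul_mul hab
  have hess (e : R) (τ : Q) := Submodule.essentialIn_inf_of_essentialIn_top
    (denominatorIdeal_essentialIn_top hRess τ) (rightAnnihilator e)
  obtain ⟨φ, hφ⟩ := (hwcep _ _ ⟨mulLeftRestrictEquiv (e := a * b) (f := b * a)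
      (by simpa using hst) (by simpa using hts) (by simpa using hft) (by simpa using hes)⟩ _ _
    (hess _ _) (isClosedSub_rightAnnihilator he) (hess _ _) (isClosedSub_rightAnnihilator hf)).1
  obtain ⟨c, hce, hfc, hker⟩ := exists_mul_of_injective_rightAnnihilator he hφ
  obtain ⟨d, hed, hdf, hdc⟩ := hRreg.exists_corner_left_inverse he hf hce hfc hker
  have : IsDedekindFiniteMonoid Q := isDedekindFiniteMonoid_of_unitRegular hQur
  have hcd : c * d = 1 - b * a := by
    have hcdQ := mul_eq_one_sub_of_corner_iso (c := (c : Q)) (d := (d : Q)) hst hts hft hes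
      (by exact_mod_cast hce) (by exact_mod_cast hfc) (by exact_mod_cast hdf)
      (by exact_mod_cast hdc)
    exact_mod_cast hcdQ
  exact exists_unit_of_complement_iso hab hce hfc hed hdf hdc hcd

/-- Let `R` be a von Neumann regular subring of its maximal right quotient ring `Q`
(a von Neumann regular, right self-injective ring in which `R` is essential as a right
`R`-module).  Suppose `R` has the weak closure extension property: for isomorphic right
ideals of `R`, their essential closures in `R` are subisomorphic (each embeds in the
other as a right `R`-module).  If `Q` is unit regular then so is `R`. -/
theorem unit_regular_descends_of_weak_closure_extension
    (Q : Type*) [Ring Q] (hQreg : IsVonNeumannRegularRing Q)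
    (hQinj : Module.Injective Qᵐᵒᵖ Q)
    (R : Subring Q) (hRreg : IsVonNeumannRegularRing ↥R)
    (hRess : EssentialInSet R (R : Set Q) Set.univ)
    (hwcep : ∀ I J : Submodule (↥R)ᵐᵒᵖ ↥R, Nonempty (I ≃ₗ[(↥R)ᵐᵒᵖ] J) →
      ∀ I' J' : Submodule (↥R)ᵐᵒᵖ ↥R,
        I.EssentialIn I' → I'.IsClosedSub → J.EssentialIn J' → J'.IsClosedSub →
        (∃ φ : I' →ₗ[(↥R)ᵐᵒᵖ] J', Function.Injective φ) ∧
        (∃ ψ : J' →ₗ[(↥R)ᵐᵒᵖ] I', Function.Injective ψ))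
    (hQur : ∀ a : Q, ∃ u : Qˣ, a = a * u * a) :
    ∀ a : ↥R, ∃ u : (↥R)ˣ, a = a * u * a :=
  unit_regular_descends_of_weak_closure_extension_general Q R hRreg hRess hwcep hQur
end
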